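/- Let n be a natural number and let v : Fin n → Bool be a vertex of the n-dimensional Boolean cube (interpret `true` as a positively smoothed crossing and `false` as a negatively smoothed one). For a position p with v p = true, write v_p for the function obtained from v by changing the value at p to false, and define t(v, p) to be the number of positions j with p < j and v j = false. Then for any two distinct positions p ≠ q with v p = true and v q = true, the signs anticommute: t(v, p) + t(v_p, q) and t(v, q) + t(v_q, p) have opposite parities, i.e., (-1)^{t(v,p) + t(v_p, q)} = -(-1)^{t(v,q) + t(v_q, p)}. -/
import Mathlib

/-- `t v p` is the number of positions `j` after `p` in the ordering at which
the state `v` is smoothed negatively (`false`). -/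
def negAfter {n : ℕ} (v : Fin n → Bool) (p : Fin n) : ℕ :=
  (Finset.univ.filter fun j : Fin n => p < j ∧ v j = false).card

lemma negAfter_update_of_not_lt {n : ℕ} (v : Fin n → Bool) (a b : Fin n)
    (h : ¬ b < a) : negAfter (Function.update v a false) b = negAfter v b := by
  unfold negAfter
  congr 1
  ext j
  simp only [Finset.mem_filter, Finset.mem_univ, true_and]
  by_cases hja : j = a
  · subst hja
    simp [h]
  · simp [Function.update_of_ne hja]

lemma negAfter_update_of_lt {n : ℕ} (v : Fin n → Bool) (a b : Fin n)
    (h : b < a) (ha : v a = true) :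
    negAfter (Function.update v a false) b = negAfter v b + 1 := by
  unfold negAfter
  have hset : (Finset.univ.filter fun j : Fin n =>
      b < j ∧ Function.update v a false j = false) =
      insert a (Finset.univ.filter fun j : Fin n => b < j ∧ v j = false) := by
    ext j
    simp only [Finset.mem_insert, Finset.mem_filter, Finset.mem_univ, true_and]
    by_cases hja : j = a
    · subst hja; simp [h]
    · simp [Function.update_of_ne hja, hja]
  rw [hset, Finset.card_insert_of_notMem (by simp [ha])]

/-- The sign lemma for the cube of smoothings: for distinct positively smoothed
crossings `p ≠ q`, the signs `(-1)^{t(v,p) + t(v_p,q)}` and `(-1)^{t(v,q) + t(v_q,p)}`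
are opposite, where `v_p` changes the smoothing at `p` from positive to negative. -/
theorem cube_sign_anticommute {n : ℕ} (v : Fin n → Bool) (p q : Fin n)
    (hpq : p ≠ q) (hp : v p = true) (hq : v q = true) :
    ((-1 : ℤ) ^ (negAfter v p + negAfter (Function.update v p false) q)) =
      -((-1 : ℤ) ^ (negAfter v q + negAfter (Function.update v q false) p)) := by
  rcases lt_or_gt_of_ne hpq with h | h
  · rw [negAfter_update_of_not_lt v p q (not_lt_of_gt h),
      negAfter_update_of_lt v q p h hq]
    ring
  · rw [negAfter_update_of_lt v p q h hp,
      negAfter_update_of_not_lt v q p (not_lt_of_gt h)]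
    ring
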